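/- arXiv:2601.00721 — 6 statements merged into one kernel-verified Lean document; each statement's English description precedes it below -/
import Mathlib

section
/- Let $F$ be a field of characteristic zero and $F(y)$ the field of rational functions in $y$ over $F$, with derivation $D_y = d/dy$ satisfying $D_y(y)=1$ and $D_y(c)=0$ for $c \in F$. If $u_1,\dots,u_n \in F[y] \setminus F$ are pairwise coprime polynomials of positive degree, $c_1,\dots,c_n \in F$, and $v \in F(y)$ satisfy $\sum_{i=1}^n c_i \frac{D_y(u_i)}{u_i} + D_y(v) = 0$, then $c_1 = \cdots = c_n = 0$ and $v \in F$. -/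
section AuxStmt0
open Polynomial Finset

variable {F : Type*} [Field F] [CharZero F]

variable {F : Type*} [Field F] [CharZero F]

lemma aux_not_dvd_deriv (q : F[X]) (hq : Irreducible q) : ¬ q ∣ derivative q := by
  intro h
  have hd0 : derivative q ≠ 0 := fun h0 =>
    hq.natDegree_pos.ne' (Polynomial.natDegree_eq_zero_of_derivative_eq_zero h0)
  exact absurd (Polynomial.degree_le_of_dvd h hd0) (not_le.mpr (degree_derivative_lt hq.ne_zero))

lemma aux_deriv_pow_mul (q : F[X]) (hq : Irreducible q) (s : ℕ)
    (t : F[X]) (ht : ¬ q ∣ t) :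
    ∃ z, derivative (q ^ (s + 1) * t) = q ^ s * z ∧ ¬ q ∣ z := by
  refine ⟨C ((s : F) + 1) * derivative q * t + q * derivative t, ?_, ?_⟩
  · rw [derivative_mul, derivative_pow]
    simp only [Nat.add_sub_cancel, Nat.cast_add, Nat.cast_one]
    ring
  · intro h
    have hsF : ((s : F) + 1) ≠ 0 := by
      have : ((s : F) + 1) = ((s + 1 : ℕ) : F) := by push_cast; ring
      rw [this]; exact Nat.cast_ne_zero.mpr (by omega)
    have h1 : q ∣ C ((s : F) + 1) * derivative q * t := by
      have h2 : q ∣ q * derivative t := dvd_mul_right _ _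
      exact (dvd_add_right h2).mp (by rwa [add_comm] at h)
    rcases hq.prime.dvd_mul.mp h1 with h2 | h2
    · rcases hq.prime.dvd_mul.mp h2 with h3 | h3
      · exact hq.not_isUnit (isUnit_of_dvd_unit h3 (isUnit_C.mpr hsF.isUnit))
      · exact aux_not_dvd_deriv q hq h3
    · exact ht h2

lemma aux_poly {n : ℕ} {u : Fin n → F[X]}
    (hdeg : ∀ i, 0 < (u i).degree)
    (hcop : ∀ i j, i ≠ j → IsCoprime (u i) (u j))
    {c : Fin n → F} {a b : F[X]} (hbm : b.Monic) (hab : IsCoprime a b)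
    (hE : (∑ i, C (c i) * derivative (u i) * ∏ k ∈ univ.erase i, u k) * b ^ 2
        + (derivative a * b - a * derivative b) * ∏ i, u i = 0) :
    (∀ i, c i = 0) ∧ derivative a = 0 ∧ b = 1 := by
  set S := ∑ i, C (c i) * derivative (u i) * ∏ k ∈ univ.erase i, u k with hSdef
  set U := ∏ i, u i with hUdef
  have hq0 : ∀ q : F[X], Irreducible q → q ≠ 0 := fun q hq => hq.ne_zero
  have hu0 : ∀ i, u i ≠ 0 := by
    intro i h
    have := hdeg i
    rw [h, degree_zero] at this
    exact absurd this (by decide)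
  have hU0 : U ≠ 0 := Finset.prod_ne_zero_iff.mpr (fun i _ => hu0 i)
  -- local decomposition at an irreducible factor of some u j
  have key : ∀ (q : F[X]), Irreducible q → ∀ j : Fin n, q ∣ u j →
      ∃ (s : ℕ) (t zj : F[X]), ¬ q ∣ t ∧ u j = q ^ (s + 1) * t ∧
        (¬ q ∣ ∏ k ∈ univ.erase j, u k) ∧
        derivative (u j) = q ^ s * zj ∧ ¬ q ∣ zj ∧
        q ^ (s + 1) ∣ (S - C (c j) * derivative (u j) * ∏ k ∈ univ.erase j, u k) ∧
        q ^ s ∣ S := by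
    intro q hq j hqj
    obtain ⟨s', t, ht, hut⟩ := WfDvdMonoid.max_power_factor (hu0 j) hq
    have hs : 1 ≤ s' := by
      rcases Nat.eq_zero_or_pos s' with h0 | h; swap
      · exact h
      · rw [h0, pow_zero, one_mul] at hut
        exact absurd (hut ▸ hqj) ht
    obtain ⟨s, rfl⟩ : ∃ s, s' = s + 1 := ⟨s' - 1, by omega⟩
    have hW : ¬ q ∣ ∏ k ∈ univ.erase j, u k := by
      intro h
      obtain ⟨k, hk, hqk⟩ := (hq.prime.dvd_finset_prod_iff u).mp h
      exact hq.not_isUnit ((hcop k j (Finset.ne_of_mem_erase hk)).isUnit_of_dvd' hqk hqj)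
    obtain ⟨zj, hzj, hzjq⟩ := aux_deriv_pow_mul q hq s t ht
    rw [← hut] at hzj
    have hrest : q ^ (s + 1) ∣ (S - C (c j) * derivative (u j) * ∏ k ∈ univ.erase j, u k) := by
      have hsplit : S - C (c j) * derivative (u j) * ∏ k ∈ univ.erase j, u k
          = ∑ i ∈ univ.erase j, C (c i) * derivative (u i) * ∏ k ∈ univ.erase i, u k := by
        rw [hSdef, ← Finset.sum_erase_add _ _ (Finset.mem_univ j)]
        ring
      rw [hsplit]
      refine Finset.dvd_sum (fun i hi => ?_)
      have hij : i ≠ j := Finset.ne_of_mem_erase hi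
      have hjmem : j ∈ univ.erase i := Finset.mem_erase.mpr ⟨hij.symm, Finset.mem_univ j⟩
      have h1 : q ^ (s + 1) ∣ u j := ⟨t, hut⟩
      exact dvd_mul_of_dvd_right (h1.trans (Finset.dvd_prod_of_mem u hjmem)) _
    refine ⟨s, t, zj, ht, hut, hW, hzj, hzjq, hrest, ?_⟩
    have hT : q ^ s ∣ C (c j) * derivative (u j) * ∏ k ∈ univ.erase j, u k := by
      rw [hzj]
      exact ⟨C (c j) * zj * ∏ k ∈ univ.erase j, u k, by ring⟩
    have := dvd_add ((pow_dvd_pow q (Nat.le_succ s)).trans hrest) hT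
    simpa using this
  -- Step A : b = 1
  have hb1 : b = 1 := by
    by_contra hb1
    have hbu : ¬ IsUnit b := fun h => hb1 (hbm.eq_one_of_isUnit h)
    obtain ⟨q, hq, hqb⟩ := WfDvdMonoid.exists_irreducible_factor hbu hbm.ne_zero
    obtain ⟨m', w, hw, hbw⟩ := WfDvdMonoid.max_power_factor hbm.ne_zero hq
    have hm : 1 ≤ m' := by
      rcases Nat.eq_zero_or_pos m' with h0 | h; swap
      · exact h
      · rw [h0, pow_zero, one_mul] at hbw
        exact absurd (hbw ▸ hqb) hw
    obtain ⟨m, rfl⟩ : ∃ m, m' = m + 1 := ⟨m' - 1, by omega⟩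
    obtain ⟨zb, hzb, hzbq⟩ := aux_deriv_pow_mul q hq m w hw
    rw [← hbw] at hzb
    have hqa : ¬ q ∣ a := fun h => hq.not_isUnit (hab.isUnit_of_dvd' h hqb)
    set z2 := q * (derivative a * w) - a * zb with hz2def
    have hABsub : derivative a * b - a * derivative b = q ^ m * z2 := by
      rw [hzb, hbw, hz2def]; ring
    have hz2 : ¬ q ∣ z2 := by
      intro h
      have h1 : q ∣ a * zb := by
        have h2 : q ∣ q * (derivative a * w) := dvd_mul_right _ _
        exact (dvd_sub_right h2).mp h
      rcases hq.prime.dvd_mul.mp h1 with h2 | h2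
      · exact hqa h2
      · exact hzbq h2
    -- q^(m+2) ∣ U
    have e2 : S * b ^ 2 = q ^ m * (q ^ (m + 2) * (S * w ^ 2)) := by rw [hbw]; ring
    have e3 : q ^ m * (z2 * U) = q ^ m * (q ^ (m + 2) * (-(S * w ^ 2))) := by
      have e1 : q ^ m * (z2 * U) = (derivative a * b - a * derivative b) * U := by
        rw [hABsub]; ring
      rw [e1]; linear_combination hE - e2
    have hz2U : z2 * U = q ^ (m + 2) * (-(S * w ^ 2)) :=
      mul_left_cancel₀ (pow_ne_zero _ hq.ne_zero) e3
    have hdvdU : q ^ (m + 2) ∣ U := by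
      have h1 : q ^ (m + 2) ∣ z2 * U := ⟨-(S * w ^ 2), hz2U⟩
      exact ((hq.coprime_iff_not_dvd.mpr hz2).pow_left).dvd_of_dvd_mul_left h1
    have hqU : q ∣ U := (dvd_pow_self q (Nat.succ_ne_zero _)).trans hdvdU
    obtain ⟨j, -, hqj⟩ := (hq.prime.dvd_finset_prod_iff u).mp hqU
    obtain ⟨s, t, zj, ht, hut, hW, hzj, hzjq, hrest, hqsS⟩ := key q hq j hqj
    have hUsplit : U = q ^ (s + 1) * (t * ∏ k ∈ univ.erase j, u k) := by
      rw [hUdef, ← Finset.mul_prod_erase _ u (Finset.mem_univ j), hut]; ring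
    -- m + 2 ≤ s + 1
    have hms : m + 2 ≤ s + 1 := by
      by_contra hlt
      push_neg at hlt
      obtain ⟨d, hd⟩ := hdvdU
      obtain ⟨e, he⟩ : ∃ e, m + 2 = (s + 1) + (e + 1) := ⟨m - s, by omega⟩
      rw [he] at hd
      have h2 : t * ∏ k ∈ univ.erase j, u k = q ^ (e + 1) * d :=
        mul_left_cancel₀ (pow_ne_zero (s + 1) hq.ne_zero)
          (by rw [← hUsplit, hd, pow_add, mul_assoc])
      have h3 : q ∣ t * ∏ k ∈ univ.erase j, u k := by
        rw [h2]
        exact ⟨q ^ e * d, by ring⟩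
      rcases hq.prime.dvd_mul.mp h3 with h4 | h4
      · exact ht h4
      · exact hW h4
    -- final contradiction
    obtain ⟨S', hS'⟩ := hqsS
    have hfin : q ^ (s + m + 1) * (z2 * (t * ∏ k ∈ univ.erase j, u k))
        = q ^ (s + m + 1) * (-(q ^ (m + 1) * (S' * w ^ 2))) := by
      have e4 : (derivative a * b - a * derivative b) * U
          = q ^ (s + m + 1) * (z2 * (t * ∏ k ∈ univ.erase j, u k)) := by
        rw [hABsub, hUsplit]; ring
      have e5 : S * b ^ 2 = q ^ (s + m + 1) * (q ^ (m + 1) * (S' * w ^ 2)) := by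
        rw [hS', hbw]; ring
      linear_combination hE - e4 - e5
    have h6 := mul_left_cancel₀ (pow_ne_zero _ hq.ne_zero) hfin
    have h7 : q ∣ z2 * (t * ∏ k ∈ univ.erase j, u k) := by
      rw [h6]
      exact (Dvd.dvd.mul_right (dvd_pow_self q (by omega)) _).neg_right
    rcases hq.prime.dvd_mul.mp h7 with h8 | h8
    · exact hz2 h8
    rcases hq.prime.dvd_mul.mp h8 with h9 | h9
    · exact ht h9
    · exact hW h9
  -- Step B : all c j = 0
  subst hb1
  rw [derivative_one, mul_zero, sub_zero, one_pow, mul_one, mul_one] at hE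
  have hc : ∀ j, c j = 0 := by
    intro j
    by_contra hcj
    have huj : ¬ IsUnit (u j) := fun h =>
      (hdeg j).ne' (Polynomial.isUnit_iff_degree_eq_zero.mp h)
    obtain ⟨q, hq, hqj⟩ := WfDvdMonoid.exists_irreducible_factor huj (hu0 j)
    obtain ⟨s, t, zj, ht, hut, hW, hzj, hzjq, hrest, hqsS⟩ := key q hq j hqj
    obtain ⟨R, hR⟩ := hrest
    -- q^(s+1) ∣ derivative a * U
    have haU : q ^ (s + 1) ∣ derivative a * U := by
      have h1 : q ^ (s + 1) ∣ U := by
        have : q ^ (s + 1) ∣ u j := ⟨t, hut⟩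
        exact this.trans (Finset.dvd_prod_of_mem u (Finset.mem_univ j))
      exact h1.mul_left _
    obtain ⟨A, hA⟩ := haU
    have hfin : q ^ s * (C (c j) * zj * ∏ k ∈ univ.erase j, u k)
        = q ^ s * (-(q * (R + A))) := by
      have e1 : C (c j) * derivative (u j) * ∏ k ∈ univ.erase j, u k
          = q ^ s * (C (c j) * zj * ∏ k ∈ univ.erase j, u k) := by
        rw [hzj]; ring
      linear_combination hE - e1 - hR - hA
    have h6 := mul_left_cancel₀ (pow_ne_zero _ hq.ne_zero) hfin
    have h7 : q ∣ C (c j) * zj * ∏ k ∈ univ.erase j, u k := by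
      rw [h6]
      exact (dvd_mul_right q (R + A)).neg_right
    rcases hq.prime.dvd_mul.mp h7 with h8 | h8
    · rcases hq.prime.dvd_mul.mp h8 with h9 | h9
      · exact hq.not_isUnit (isUnit_of_dvd_unit h9 (isUnit_C.mpr (Ne.isUnit hcj)))
      · exact hzjq h9
    · exact hW h8
  refine ⟨hc, ?_, rfl⟩
  have hS0 : S = 0 := by
    rw [hSdef]
    refine Finset.sum_eq_zero (fun i _ => ?_)
    rw [hc i, map_zero, zero_mul, zero_mul]
  rw [hS0, zero_add] at hE
  rcases mul_eq_zero.mp hE with h | h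
  · exact h
  · exact absurd h hU0


lemma aux_D_algebraMap (D : Derivation F (RatFunc F) (RatFunc F)) (hD : D RatFunc.X = 1)
    (p : F[X]) :
    D (algebraMap F[X] (RatFunc F) p) = algebraMap F[X] (RatFunc F) (derivative p) := by
  induction p using Polynomial.induction_on with
  | C a =>
      have h1 : (algebraMap F[X] (RatFunc F)) (C a) = algebraMap F (RatFunc F) a := by
        rw [RatFunc.algebraMap_eq_C, RatFunc.algebraMap_C]
      rw [derivative_C, map_zero, h1, Derivation.map_algebraMap]
  | add p q hp hq => simp [map_add, hp, hq]
  | monomial n a ih =>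
      have hX : (algebraMap F[X] (RatFunc F)) X = RatFunc.X := RatFunc.algebraMap_X
      have h1 : (C a * X ^ (n + 1) : F[X]) = (C a * X ^ n) * X := by ring
      rw [h1, map_mul, Derivation.leibniz, ih, hX, hD]
      have h2 : derivative (C a * X ^ n * X) = derivative (C a * X ^ n) * X + C a * X ^ n := by
        rw [derivative_mul, derivative_X]; ring
      rw [h2]
      simp only [map_add, map_mul, hX, smul_eq_mul, mul_one]
      ring

end AuxStmt0

open Polynomial Finset in
/-- Lemma 2.1: if `∑ cᵢ D(uᵢ)/uᵢ + D(v) = 0` with `uᵢ` pairwise coprime nonconstant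
polynomials and `cᵢ ∈ F`, then all `cᵢ = 0` and `v` is a constant (lies in `F`). -/
theorem stmt_0 (F : Type*) [Field F] [CharZero F]
    (D : Derivation F (RatFunc F) (RatFunc F)) (hD : D RatFunc.X = 1)
    (n : ℕ) (u : Fin n → Polynomial F)
    (hdeg : ∀ i, 0 < (u i).degree)
    (hcop : ∀ i j, i ≠ j → IsCoprime (u i) (u j))
    (c : Fin n → F) (v : RatFunc F)
    (heq : (∑ i, RatFunc.C (c i) *
        D (algebraMap (Polynomial F) (RatFunc F) (u i)) /
        algebraMap (Polynomial F) (RatFunc F) (u i)) + D v = 0) :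
    (∀ i, c i = 0) ∧ ∃ w : F, v = RatFunc.C w := by
  have auxD : ∀ p : F[X], D (algebraMap F[X] (RatFunc F) p)
      = algebraMap F[X] (RatFunc F) (derivative p) := aux_D_algebraMap D hD
  set φ := algebraMap F[X] (RatFunc F) with hφ
  have hφinj : Function.Injective φ := RatFunc.algebraMap_injective F
  have hu0 : ∀ i, u i ≠ 0 := by
    intro i h
    have := hdeg i
    rw [h, degree_zero] at this
    exact absurd this (by decide)
  have hφu : ∀ i, φ (u i) ≠ 0 := fun i h => hu0 i (hφinj (by rw [h, map_zero]))
  set a := v.num with ha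
  set b := v.denom with hbdef
  have hb0 : b ≠ 0 := v.denom_ne_zero
  have hφb : φ b ≠ 0 := fun h => hb0 (hφinj (by rw [h, map_zero]))
  have hva : v * φ b = φ a := by
    rw [← RatFunc.num_div_denom v, div_mul_cancel₀ _ hφb]
  have hDvb2 : D v * φ b ^ 2 = φ (derivative a * b - a * derivative b) := by
    have h1 : D (v * φ b) = D (φ a) := by rw [hva]
    rw [Derivation.leibniz, auxD, auxD] at h1
    have h2 : v * φ (derivative b) + φ b * D v = φ (derivative a) := by
      simpa [smul_eq_mul] using h1
    calc D v * φ b ^ 2 = (φ b * D v) * φ b := by ring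
      _ = (φ (derivative a) - v * φ (derivative b)) * φ b := by
          rw [← h2]; ring
      _ = φ (derivative a) * φ b - (v * φ b) * φ (derivative b) := by ring
      _ = φ (derivative a * b - a * derivative b) := by
          rw [hva, map_sub, map_mul, map_mul]
  have hterm : ∀ i : Fin n, (RatFunc.C (c i) * D (φ (u i)) / φ (u i)) * (φ (∏ k, u k) * φ b ^ 2)
      = φ (C (c i) * derivative (u i) * ∏ k ∈ univ.erase i, u k) * φ b ^ 2 := by
    intro i
    rw [auxD]
    have hsplit : (∏ k, u k) = u i * ∏ k ∈ univ.erase i, u k :=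
      (Finset.mul_prod_erase _ u (Finset.mem_univ i)).symm
    rw [hsplit]
    have hC : RatFunc.C (c i) = φ (C (c i)) := (RatFunc.algebraMap_C (c i)).symm
    rw [hC]
    simp only [map_mul]
    field_simp [hφu i]
  have hE : (∑ i, C (c i) * derivative (u i) * ∏ k ∈ univ.erase i, u k) * b ^ 2
      + (derivative a * b - a * derivative b) * ∏ i, u i = 0 := by
    apply hφinj
    rw [map_zero, map_add, map_mul, map_mul, map_sum, map_pow]
    have h0 : ((∑ i, RatFunc.C (c i) * D (φ (u i)) / φ (u i)) + D v)
        * (φ (∏ k, u k) * φ b ^ 2) = 0 := by rw [heq, zero_mul]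
    rw [add_mul, Finset.sum_mul] at h0
    calc (∑ i, φ (C (c i) * derivative (u i) * ∏ k ∈ univ.erase i, u k)) * φ b ^ 2
          + φ (derivative a * b - a * derivative b) * φ (∏ i, u i)
        = (∑ i, (RatFunc.C (c i) * D (φ (u i)) / φ (u i)) * (φ (∏ k, u k) * φ b ^ 2))
          + D v * (φ (∏ k, u k) * φ b ^ 2) := by
          rw [Finset.sum_mul]
          congr 1
          · exact Finset.sum_congr rfl (fun i _ => (hterm i).symm)
          · rw [← hDvb2]; ring
      _ = 0 := h0
  obtain ⟨hc, hda, hb1⟩ := aux_poly hdeg hcop (RatFunc.monic_denom v) (RatFunc.isCoprime_num_denom v) hE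
  obtain ⟨w, hw⟩ : ∃ w, a = C w := ⟨a.coeff 0, Polynomial.eq_C_of_derivative_eq_zero hda⟩
  refine ⟨hc, w, ?_⟩
  have hb1' : b = 1 := hbdef.trans hb1
  rw [← RatFunc.num_div_denom v]
  simp only [← ha, ← hbdef]
  rw [hw, hb1', map_one, div_one, RatFunc.algebraMap_C]
end

section
/- Let $K \subseteq E$ be a finite Galois extension of differential fields of characteristic zero, where the derivation $D$ on $E$ extends that on $K$ and every $K$-automorphism of $E$ commutes with $D$. If $f \in E$ satisfies $D(f) \in K$, then $f = g + c$ where $g := \frac{1}{[E:K]}\mathrm{Tr}_{E/K}(f) \in K$ and $c \in E$ is a constant, i.e., $D(c) = 0$. -/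
/-!
The average `g = [E:K]⁻¹ ∑_σ σ f` is `[E:K]⁻¹ Tr_{E/K}(f)`, so it lies in `K`. Any additive `D`
commutes with multiplication by `[E:K]⁻¹`, and if it also commutes with the Galois group it
commutes with the average. Since `D f ∈ K` is its own average, `D g = D f`.
-/

open Module

section GaloisAverage

variable (K : Type*) {E : Type*} [Field K] [Field E] [Algebra K E] [FiniteDimensional K E]

noncomputable def galoisAverage (x : E) : E :=
  (finrank K E : E)⁻¹ * ∑ σ : E ≃ₐ[K] E, σ x

theorem galoisAverage_eq_algebraMap_trace [IsGalois K E] (x : E) :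
    galoisAverage K x = algebraMap K E ((finrank K E : K)⁻¹ * Algebra.trace K E x) := by
  rw [galoisAverage, map_mul, trace_eq_sum_automorphisms, map_inv₀, map_natCast]

theorem galoisAverage_mem_range [IsGalois K E] (x : E) :
    galoisAverage K x ∈ Set.range (algebraMap K E) :=
  ⟨_, (galoisAverage_eq_algebraMap_trace K x).symm⟩

theorem galoisAverage_algebraMap [CharZero K] [IsGalois K E] (a : K) :
    galoisAverage K (algebraMap K E a) = algebraMap K E a := by
  have hn : (finrank K E : E) ≠ 0 := by
    rw [← map_natCast (algebraMap K E), map_ne_zero, Nat.cast_ne_zero]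
    exact finrank_pos.ne'
  simp only [galoisAverage, AlgEquiv.commutes, Finset.sum_const, Finset.card_univ,
    ← Nat.card_eq_fintype_card, IsGalois.card_aut_eq_finrank, nsmul_eq_mul]
  exact inv_mul_cancel_left₀ hn _

theorem map_galoisAverage (D : E →+ E) (hcomm : ∀ σ : E ≃ₐ[K] E, ∀ a : E, σ (D a) = D (σ a))
    (x : E) : D (galoisAverage K x) = galoisAverage K (D x) := by
  simp only [galoisAverage, ← smul_eq_mul, map_inv_natCast_smul D E E, map_sum, hcomm]

end GaloisAverage

theorem stmt_3_general (K E : Type*) [Field K] [Field E] [CharZero K] [Algebra K E]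
    [FiniteDimensional K E] [IsGalois K E]
    (D : E → E)
    (hadd : ∀ a b : E, D (a + b) = D a + D b)
    (hcomm : ∀ σ : E ≃ₐ[K] E, ∀ a : E, σ (D a) = D (σ a))
    (f : E) (hf : D f ∈ Set.range (algebraMap K E)) :
    ((Module.finrank K E : E)⁻¹ * ∑ σ : E ≃ₐ[K] E, σ f) ∈ Set.range (algebraMap K E) ∧
    D (f - (Module.finrank K E : E)⁻¹ * ∑ σ : E ≃ₐ[K] E, σ f) = 0 := by
  let D' : E →+ E := AddMonoidHom.mk' D hadd
  refine ⟨galoisAverage_mem_range K f, ?_⟩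
  obtain ⟨a, ha⟩ := hf
  change D' (f - galoisAverage K f) = 0
  rw [map_sub, map_galoisAverage K D' hcomm]
  change D f - galoisAverage K (D f) = 0
  rw [← ha, galoisAverage_algebraMap, sub_self]

/-- Lemma (trace argument): let `K ⊆ E` be a finite Galois extension of differential
fields of characteristic zero, where the derivation `D` on `E` maps (the image of) `K`
to itself and commutes with every `K`-automorphism of `E`.  If `f ∈ E` satisfies
`D(f) ∈ K`, then `f = g + c` where `g = (1/[E:K]) Tr_{E/K}(f)` lies in `K` and
`c = f - g` is a constant, i.e. `D(c) = 0`. -/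
theorem stmt_3 (K E : Type*) [Field K] [Field E] [CharZero K] [Algebra K E]
    [FiniteDimensional K E] [IsGalois K E]
    (D : E → E)
    (hadd : ∀ a b : E, D (a + b) = D a + D b)
    (hmul : ∀ a b : E, D (a * b) = a * D b + b * D a)
    (hcomm : ∀ σ : E ≃ₐ[K] E, ∀ a : E, σ (D a) = D (σ a))
    (hK : ∀ x : K, D (algebraMap K E x) ∈ Set.range (algebraMap K E))
    (f : E) (hf : D f ∈ Set.range (algebraMap K E)) :
    ((Module.finrank K E : E)⁻¹ * ∑ σ : E ≃ₐ[K] E, σ f) ∈ Set.range (algebraMap K E) ∧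
    D (f - (Module.finrank K E : E)⁻¹ * ∑ σ : E ≃ₐ[K] E, σ f) = 0 :=
  stmt_3_general K E D hadd hcomm f hf
end

section
/- Let $k$ be a field of characteristic zero, $K = k(x_1, \dots, x_m)$ with partial derivations $\partial_1, \dots, \partial_m$, and let $\omega = f_1\,dx_1 + \cdots + f_m\,dx_m$ be a closed rational $1$-form (i.e., $\partial_i(f_j) = \partial_j(f_i)$ for all $i,j$). If each $f_i$, viewed as a univariate rational function in $x_m$ over $F = k(x_1,\dots,x_{m-1})$, is written via partial fractions, then the residues of $f_m$ at its poles in $\overline{F}$ are constants: if $f_m = \partial_m(a) + \sum_j c_j \partial_m(b_j)/b_j$ with $a \in K$, $c_j \in \overline{F}$, and $b_j \in F(c_j)[x_m]$ pairwise coprime of positive degree, then $\partial_i(c_j) = 0$ for all $i = 1, \dots, m-1$. -/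
/-!
Applying `∂ᵢ` to the decomposition of `f_m`, and using `∂ᵢ f_m = ∂_m fᵢ` and
`∂ᵢ (∂_m b / b) = ∂_m (∂ᵢ b / b)`, shows that `∑ⱼ ∂ᵢ(cⱼ) ∂_m(bⱼ)/bⱼ = (u/v)'` for some
coprime `u, v`. At a root `α` of `bⱼ` in `F̄` the left side has a pole of order exactly one
when `∂ᵢ(cⱼ) ≠ 0` (by coprimality no other `b` vanishes at `α`), whereas `(u/v)'` never has
a simple pole. Concretely, root multiplicities at `α` in `P v² = W(v, u) ∏ bⱼ`, with `P` the
numerator of the left side and `W` the Wronskian, cannot match.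
-/

/-- The embedding of `RatFunc F` into `RatFunc E` induced by a field embedding
`ψ : F →+* E`, sending `num/denom` to `(num.map ψ)/(denom.map ψ)`. -/
noncomputable def liftRF {F E : Type*} [Field F] [Field E] (ψ : F →+* E)
    (f : RatFunc F) : RatFunc E :=
  algebraMap (Polynomial E) (RatFunc E) (f.num.map ψ) /
    algebraMap (Polynomial E) (RatFunc E) (f.denom.map ψ)

open Function Polynomial

namespace Polynomial

section CommRing

variable {R : Type*} [CommRing R] {p q : R[X]} {a : R}

theorem add_ne_zero_of_pow_rootMultiplicity_succ_dvd (hp : p ≠ 0)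
    (hq : (X - C a) ^ (p.rootMultiplicity a + 1) ∣ q) : p + q ≠ 0 := fun hpq =>
  pow_rootMultiplicity_not_dvd hp a <| by
    simpa [eq_neg_of_add_eq_zero_left hpq] using hq.neg_right

theorem rootMultiplicity_add_of_pow_rootMultiplicity_succ_dvd (hp : p ≠ 0)
    (hq : (X - C a) ^ (p.rootMultiplicity a + 1) ∣ q) :
    (p + q).rootMultiplicity a = p.rootMultiplicity a := by
  have hpq := add_ne_zero_of_pow_rootMultiplicity_succ_dvd hp hq
  refine le_antisymm ?_ ?_
  · rw [rootMultiplicity_le_iff hpq]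
    exact fun hdvd => pow_rootMultiplicity_not_dvd hp a (by simpa using dvd_sub hdvd hq)
  · rw [le_rootMultiplicity_iff hpq]
    exact dvd_add (pow_rootMultiplicity_dvd p a) ((pow_dvd_pow _ (Nat.le_succ _)).trans hq)

theorem not_isRoot_of_isCoprime_of_isRoot [Nontrivial R] (h : IsCoprime p q) (hq : q.IsRoot a) :
    ¬ p.IsRoot a := by
  obtain ⟨s, t, hst⟩ := h
  intro hp
  simpa [hp.eq_zero, hq.eq_zero] using congrArg (eval a) hst

end CommRing

section CharZero

variable {R : Type*} [CommRing R] [IsDomain R] [CharZero R] {p q r : R[X]} {a c : R}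

theorem derivative_ne_zero_of_isRoot (hp : p ≠ 0) (ha : p.IsRoot a) : derivative p ≠ 0 := by
  rw [Ne, derivative_eq_zero, natDegree_eq_zero]
  rintro ⟨c, rfl⟩
  simp_all

theorem C_mul_derivative_mul_ne_zero (hc : c ≠ 0) (hp : p ≠ 0) (ha : p.IsRoot a)
    (hq : ¬ q.IsRoot a) : C c * derivative p * q ≠ 0 :=
  mul_ne_zero (mul_ne_zero (C_ne_zero.mpr hc) (derivative_ne_zero_of_isRoot hp ha))
    (ne_of_apply_ne (eval a) (by simpa using hq))

theorem rootMultiplicity_C_mul_derivative_mul (hc : c ≠ 0) (hp : p ≠ 0) (ha : p.IsRoot a)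
    (hq : ¬ q.IsRoot a) :
    (C c * derivative p * q).rootMultiplicity a = p.rootMultiplicity a - 1 := by
  have hne := C_mul_derivative_mul_ne_zero hc hp ha hq
  rw [rootMultiplicity_mul hne, rootMultiplicity_mul (left_ne_zero_of_mul hne),
    rootMultiplicity_C, derivative_rootMultiplicity_of_root ha, rootMultiplicity_eq_zero hq,
    zero_add, add_zero]

theorem pow_rootMultiplicity_C_mul_derivative_mul_succ (hc : c ≠ 0) (hp : p ≠ 0)
    (ha : p.IsRoot a) (hq : ¬ q.IsRoot a) :
    (X - C a) ^ ((C c * derivative p * q).rootMultiplicity a + 1) =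
      (X - C a) ^ p.rootMultiplicity a := by
  rw [rootMultiplicity_C_mul_derivative_mul hc hp ha hq,
    Nat.sub_add_cancel ((rootMultiplicity_pos hp).mpr ha)]

theorem C_mul_derivative_mul_add_ne_zero (hc : c ≠ 0) (hp : p ≠ 0) (ha : p.IsRoot a)
    (hq : ¬ q.IsRoot a) (hr : (X - C a) ^ p.rootMultiplicity a ∣ r) :
    C c * derivative p * q + r ≠ 0 :=
  add_ne_zero_of_pow_rootMultiplicity_succ_dvd (C_mul_derivative_mul_ne_zero hc hp ha hq)
    (by rwa [pow_rootMultiplicity_C_mul_derivative_mul_succ hc hp ha hq])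

theorem rootMultiplicity_C_mul_derivative_mul_add (hc : c ≠ 0) (hp : p ≠ 0) (ha : p.IsRoot a)
    (hq : ¬ q.IsRoot a) (hr : (X - C a) ^ p.rootMultiplicity a ∣ r) :
    (C c * derivative p * q + r).rootMultiplicity a = p.rootMultiplicity a - 1 := by
  rw [rootMultiplicity_add_of_pow_rootMultiplicity_succ_dvd
    (C_mul_derivative_mul_ne_zero hc hp ha hq)
    (by rwa [pow_rootMultiplicity_C_mul_derivative_mul_succ hc hp ha hq]),
    rootMultiplicity_C_mul_derivative_mul hc hp ha hq]

theorem rootMultiplicity_wronskian_of_isRoot {u v : R[X]} (hv0 : v ≠ 0) (hv : v.IsRoot a)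
    (hu : ¬ u.IsRoot a) : (wronskian v u).rootMultiplicity a = v.rootMultiplicity a - 1 := by
  have hW : wronskian v u = C (-1) * derivative v * u + v * derivative u := by
    simp only [wronskian, map_neg, map_one]; ring
  rw [hW, rootMultiplicity_C_mul_derivative_mul_add (neg_ne_zero.mpr one_ne_zero) hv0 hv hu
    (dvd_mul_of_dvd_left (pow_rootMultiplicity_dvd v a) _)]

end CharZero

section LogDerivNumerator

open Finset

variable {R : Type*} [CommRing R] {ι : Type*} [Fintype ι] [DecidableEq ι]
  {e : ι → R} {b : ι → R[X]} {a : R} {j : ι}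

/-- The numerator of `∑ l, e l * (b l)' / b l` over the common denominator `∏ l, b l`. -/
noncomputable def logDerivNumerator (e : ι → R) (b : ι → R[X]) : R[X] :=
  ∑ l, C (e l) * derivative (b l) * ∏ t ∈ univ.erase l, b t

theorem logDerivNumerator_eq_add_sum_erase (e : ι → R) (b : ι → R[X]) (j : ι) :
    logDerivNumerator e b = C (e j) * derivative (b j) * ∏ t ∈ univ.erase j, b t +
      ∑ l ∈ univ.erase j, C (e l) * derivative (b l) * ∏ t ∈ univ.erase l, b t :=
  (add_sum_erase _ _ (mem_univ j)).symm

theorem dvd_sum_erase_C_mul_derivative_mul_prod_erase (e : ι → R) (b : ι → R[X]) (j : ι) :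
    b j ∣ ∑ l ∈ univ.erase j, C (e l) * derivative (b l) * ∏ t ∈ univ.erase l, b t :=
  dvd_sum fun _ hl => dvd_mul_of_dvd_right
    (dvd_prod_of_mem b (mem_erase.mpr ⟨(ne_of_mem_erase hl).symm, mem_univ j⟩)) _

variable [IsDomain R]

theorem not_isRoot_prod_erase_of_pairwise_isCoprime (hb : Pairwise (IsCoprime on b))
    (ha : (b j).IsRoot a) : ¬ (∏ t ∈ univ.erase j, b t).IsRoot a := by
  rw [IsRoot, eval_prod, prod_eq_zero_iff]
  rintro ⟨t, ht, hroot⟩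
  exact not_isRoot_of_isCoprime_of_isRoot (hb (ne_of_mem_erase ht)) ha hroot

theorem rootMultiplicity_prod_of_pairwise_isCoprime (hb : Pairwise (IsCoprime on b))
    (hb0 : b j ≠ 0) (ha : (b j).IsRoot a) :
    (∏ l, b l).rootMultiplicity a = (b j).rootMultiplicity a := by
  have hrest := not_isRoot_prod_erase_of_pairwise_isCoprime hb ha
  rw [← mul_prod_erase univ b (mem_univ j), rootMultiplicity_mul, rootMultiplicity_eq_zero hrest,
    add_zero]
  exact mul_ne_zero hb0 fun h => hrest (by simp [h])

variable [CharZero R]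

theorem logDerivNumerator_ne_zero (hb : Pairwise (IsCoprime on b)) (hb0 : b j ≠ 0)
    (ha : (b j).IsRoot a) (he : e j ≠ 0) : logDerivNumerator e b ≠ 0 := by
  rw [logDerivNumerator_eq_add_sum_erase e b j]
  exact C_mul_derivative_mul_add_ne_zero he hb0 ha
    (not_isRoot_prod_erase_of_pairwise_isCoprime hb ha)
    ((pow_rootMultiplicity_dvd _ a).trans (dvd_sum_erase_C_mul_derivative_mul_prod_erase e b j))

theorem rootMultiplicity_logDerivNumerator (hb : Pairwise (IsCoprime on b)) (hb0 : b j ≠ 0)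
    (ha : (b j).IsRoot a) (he : e j ≠ 0) :
    (logDerivNumerator e b).rootMultiplicity a = (b j).rootMultiplicity a - 1 := by
  rw [logDerivNumerator_eq_add_sum_erase e b j]
  exact rootMultiplicity_C_mul_derivative_mul_add he hb0 ha
    (not_isRoot_prod_erase_of_pairwise_isCoprime hb ha)
    ((pow_rootMultiplicity_dvd _ a).trans (dvd_sum_erase_C_mul_derivative_mul_prod_erase e b j))

theorem eq_zero_of_logDerivNumerator_mul_eq_wronskian_mul {u v : R[X]}
    (hb : Pairwise (IsCoprime on b)) (hb0 : b j ≠ 0) (ha : (b j).IsRoot a)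
    (huv : IsCoprime u v) (hv : v ≠ 0)
    (h : logDerivNumerator e b * v ^ 2 = wronskian v u * ∏ l, b l) : e j = 0 := by
  by_contra he
  have hP := logDerivNumerator_ne_zero hb hb0 ha he
  have hPv : logDerivNumerator e b * v ^ 2 ≠ 0 := mul_ne_zero hP (pow_ne_zero 2 hv)
  have hμ := congrArg (rootMultiplicity a) h
  rw [rootMultiplicity_mul hPv, sq, rootMultiplicity_mul (mul_ne_zero hv hv),
    rootMultiplicity_mul (h ▸ hPv),
    rootMultiplicity_logDerivNumerator hb hb0 ha he,
    rootMultiplicity_prod_of_pairwise_isCoprime hb hb0 ha] at hμ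
  have hμb := (rootMultiplicity_pos hb0).mpr ha
  by_cases hva : v.IsRoot a
  · rw [rootMultiplicity_wronskian_of_isRoot hv hva (not_isRoot_of_isCoprime_of_isRoot huv hva)]
      at hμ
    have := (rootMultiplicity_pos hv).mpr hva
    omega
  · rw [rootMultiplicity_eq_zero hva] at hμ
    omega

end LogDerivNumerator

end Polynomial

namespace Derivation

def mkInt {A : Type*} [CommRing A] (d : A → A) (map_add : ∀ x y, d (x + y) = d x + d y)
    (leibniz : ∀ x y, d (x * y) = x * d y + y * d x) : Derivation ℤ A A :=
  Derivation.mk' (AddMonoidHom.mk' d map_add).toIntLinearMap leibniz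

theorem apply_div_self_comm {R S K : Type*} [CommRing R] [CommRing S] [Field K] [Algebra R K]
    [Algebra S K] (D₁ : Derivation R K K) (D₂ : Derivation S K K)
    (h : ∀ z, D₁ (D₂ z) = D₂ (D₁ z)) (x : K) : D₁ (D₂ x / x) = D₂ (D₁ x / x) := by
  simp only [leibniz_div, h, smul_eq_mul]
  ring

theorem exists_sum_algebraMap_mul_logDeriv_eq_apply {L K ι : Type*} [Field L] [Field K]
    [Algebra L K] [Fintype ι] {δ : L → L} (d : Derivation ℤ K K)
    (hdC : ∀ c, d (algebraMap L K c) = algebraMap L K (δ c))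
    (D : Derivation L K K) (hcomm : ∀ z, d (D z) = D (d z))
    {f g a : K} (hclosed : d f = D g) {c : ι → L} {B : ι → K}
    (hdec : f = D a + ∑ l, algebraMap L K (c l) * D (B l) / B l) :
    ∃ h, ∑ l, algebraMap L K (δ (c l)) * (D (B l) / B l) = D h := by
  have hterm (l : ι) : d (algebraMap L K (c l) * D (B l) / B l) =
      algebraMap L K (δ (c l)) * (D (B l) / B l) + D (algebraMap L K (c l) * (d (B l) / B l)) := by
    simp only [mul_div_assoc, d.leibniz, D.leibniz, hdC, D.map_algebraMap,
      apply_div_self_comm d D hcomm, smul_eq_mul, mul_zero, add_zero]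
    ring
  refine ⟨g - d a - ∑ l, algebraMap L K (c l) * (d (B l) / B l), ?_⟩
  rw [map_sub, map_sub, map_sum, ← hclosed, hdec, map_add, hcomm, map_sum]
  simp only [hterm, Finset.sum_add_distrib]
  ring

end Derivation

namespace RatFunc

variable {L : Type*} [Field L] {ι : Type*} [Fintype ι]

theorem derivation_algebraMap_of_apply_X (D : Derivation L (RatFunc L) (RatFunc L))
    (hX : D X = 1) (q : L[X]) :
    D (algebraMap L[X] (RatFunc L) q) = algebraMap L[X] (RatFunc L) (derivative q) := by
  have : D.compAlgebraMap L[X] = mkDerivation L 1 := derivation_ext (by simp [hX])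
  simpa [mkDerivation_apply, Algebra.smul_def] using congrArg (· q) this

theorem derivation_algebraMap_div_algebraMap (D : Derivation L (RatFunc L) (RatFunc L))
    (hX : D X = 1) (u v : L[X]) :
    D (algebraMap L[X] (RatFunc L) u / algebraMap L[X] (RatFunc L) v) =
      algebraMap L[X] (RatFunc L) (wronskian v u) / algebraMap L[X] (RatFunc L) (v ^ 2) := by
  simp only [Derivation.leibniz_div, derivation_algebraMap_of_apply_X D hX, wronskian, smul_eq_mul,
    map_sub, map_mul, map_pow]
  ring

theorem sum_C_mul_div_eq_logDerivNumerator_div [DecidableEq ι] (e : ι → L) {b : ι → L[X]}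
    (hb : ∀ l, b l ≠ 0) :
    ∑ l, C (e l) * (algebraMap L[X] (RatFunc L) (derivative (b l)) /
        algebraMap L[X] (RatFunc L) (b l)) =
      algebraMap L[X] (RatFunc L) (logDerivNumerator e b) /
        algebraMap L[X] (RatFunc L) (∏ l, b l) := by
  rw [eq_div_iff (algebraMap_ne_zero (Finset.prod_ne_zero_iff.mpr fun l _ => hb l)),
    Finset.sum_mul, logDerivNumerator, map_sum]
  refine Finset.sum_congr rfl fun l _ => ?_
  rw [← Finset.mul_prod_erase _ _ (Finset.mem_univ l)]
  have := algebraMap_ne_zero (hb l)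
  simp only [map_mul, algebraMap_C]
  field_simp

theorem eq_zero_of_sum_C_mul_logDeriv_eq_apply [IsAlgClosed L] [CharZero L]
    (D : Derivation L (RatFunc L) (RatFunc L)) (hX : D X = 1) {b : ι → L[X]}
    (hbdeg : ∀ l, 0 < (b l).degree) (hb : Pairwise (IsCoprime on b)) {e : ι → L}
    {h : RatFunc L}
    (heq : ∑ l, C (e l) * (D (algebraMap L[X] (RatFunc L) (b l)) /
      algebraMap L[X] (RatFunc L) (b l)) = D h) (j : ι) : e j = 0 := by
  classical
  have hb0 : ∀ l, b l ≠ 0 := fun l => ne_zero_of_degree_gt (hbdeg l)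
  obtain ⟨α, hα⟩ := IsAlgClosed.exists_root (b j) (hbdeg j).ne'
  rw [← h.num_div_denom, derivation_algebraMap_div_algebraMap D hX] at heq
  simp only [derivation_algebraMap_of_apply_X D hX] at heq
  rw [sum_C_mul_div_eq_logDerivNumerator_div e hb0,
    div_eq_div_iff (algebraMap_ne_zero (Finset.prod_ne_zero_iff.mpr fun l _ => hb0 l))
      (algebraMap_ne_zero (pow_ne_zero 2 h.denom_ne_zero)), ← map_mul, ← map_mul] at heq
  exact eq_zero_of_logDerivNumerator_mul_eq_wronskian_mul hb (hb0 j) hα h.isCoprime_num_denom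
    h.denom_ne_zero (algebraMap_injective L heq)

end RatFunc

theorem stmt_5_general (k : Type*) [Field k] [CharZero k] (p : ℕ)
    (δ : Fin p →
      AlgebraicClosure (FractionRing (MvPolynomial (Fin p) k)) →
      AlgebraicClosure (FractionRing (MvPolynomial (Fin p) k)))
    (D' : Fin p →
      RatFunc (AlgebraicClosure (FractionRing (MvPolynomial (Fin p) k))) →
      RatFunc (AlgebraicClosure (FractionRing (MvPolynomial (Fin p) k))))
    (hD'add : ∀ i a b, D' i (a + b) = D' i a + D' i b)
    (hD'mul : ∀ i a b, D' i (a * b) = a * D' i b + b * D' i a)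
    (hD'C : ∀ i a, D' i (RatFunc.C a) = RatFunc.C (δ i a))
    (Dm : Derivation (AlgebraicClosure (FractionRing (MvPolynomial (Fin p) k)))
      (RatFunc (AlgebraicClosure (FractionRing (MvPolynomial (Fin p) k))))
      (RatFunc (AlgebraicClosure (FractionRing (MvPolynomial (Fin p) k)))))
    (hDmX : Dm RatFunc.X = 1)
    (hcomm : ∀ i z, D' i (Dm z) = Dm (D' i z))
    (ff : Fin p → RatFunc (FractionRing (MvPolynomial (Fin p) k)))
    (fm : RatFunc (FractionRing (MvPolynomial (Fin p) k)))
    (hclosed₁ : ∀ i : Fin p,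
      D' i (liftRF (algebraMap _ _) fm) = Dm (liftRF (algebraMap _ _) (ff i)))
    (n : ℕ) (a : RatFunc (FractionRing (MvPolynomial (Fin p) k)))
    (c : Fin n → AlgebraicClosure (FractionRing (MvPolynomial (Fin p) k)))
    (b : Fin n → Polynomial (AlgebraicClosure (FractionRing (MvPolynomial (Fin p) k))))
    (hbdeg : ∀ j, 0 < (b j).degree)
    (hbcop : ∀ j₁ j₂, j₁ ≠ j₂ → IsCoprime (b j₁) (b j₂))
    (hdec : liftRF (algebraMap _ _) fm = Dm (liftRF (algebraMap _ _) a) +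
      ∑ j, RatFunc.C (c j) *
        Dm (algebraMap (Polynomial _) (RatFunc _) (b j)) /
        algebraMap (Polynomial _) (RatFunc _) (b j)) :
    ∀ (i : Fin p) (j : Fin n), δ i (c j) = 0 := by
  intro i j
  obtain ⟨h, hh⟩ := Derivation.exists_sum_algebraMap_mul_logDeriv_eq_apply
    (Derivation.mkInt (D' i) (hD'add i) (hD'mul i)) (hD'C i) Dm (hcomm i) (hclosed₁ i) hdec
  exact RatFunc.eq_zero_of_sum_C_mul_logDeriv_eq_apply Dm hDmX hbdeg
    (fun j₁ j₂ => hbcop j₁ j₂) hh j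

/-- Key step in the proof of the closed 1-form integration theorem: let
`F = k(x₁,…,x_{m-1})` (realized with `p = m-1` variables), `K = F(x_m)` and `F̄` the
algebraic closure of `F`.  Let `∂₁,…,∂_{m-1}` (given on `F̄` by `δ` and extended to
`F̄(x_m)` by `D'`, acting trivially on `x_m`) and `∂_m = d/dx_m` (given by `Dm`) be the
commuting partial derivations.  Suppose `ω = f₁ dx₁ + ⋯ + f_{m-1} dx_{m-1} + f_m dx_m`
is a closed 1-form with coefficients in `K`, and `f_m = ∂_m(a) + ∑_j c_j ∂_m(b_j)/b_j`
with `a ∈ K`, `c_j ∈ F̄` and `b_j` pairwise coprime polynomials in `x_m` of positive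
degree.  Then the residues `c_j` are constants for the other derivations:
`∂_i(c_j) = 0` for all `i = 1,…,m-1`. -/
theorem stmt_5 (k : Type*) [Field k] [CharZero k] (p : ℕ)
    (δ : Fin p →
      AlgebraicClosure (FractionRing (MvPolynomial (Fin p) k)) →
      AlgebraicClosure (FractionRing (MvPolynomial (Fin p) k)))
    (hδadd : ∀ i a b, δ i (a + b) = δ i a + δ i b)
    (hδmul : ∀ i a b, δ i (a * b) = a * δ i b + b * δ i a)
    (hδX : ∀ i j : Fin p,
      δ i (algebraMap (FractionRing (MvPolynomial (Fin p) k))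
          (AlgebraicClosure (FractionRing (MvPolynomial (Fin p) k)))
          (algebraMap (MvPolynomial (Fin p) k) (FractionRing (MvPolynomial (Fin p) k))
            (MvPolynomial.X j))) = if i = j then 1 else 0)
    (D' : Fin p →
      RatFunc (AlgebraicClosure (FractionRing (MvPolynomial (Fin p) k))) →
      RatFunc (AlgebraicClosure (FractionRing (MvPolynomial (Fin p) k))))
    (hD'add : ∀ i a b, D' i (a + b) = D' i a + D' i b)
    (hD'mul : ∀ i a b, D' i (a * b) = a * D' i b + b * D' i a)
    (hD'C : ∀ i a, D' i (RatFunc.C a) = RatFunc.C (δ i a))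
    (hD'X : ∀ i, D' i RatFunc.X = 0)
    (Dm : Derivation (AlgebraicClosure (FractionRing (MvPolynomial (Fin p) k)))
      (RatFunc (AlgebraicClosure (FractionRing (MvPolynomial (Fin p) k))))
      (RatFunc (AlgebraicClosure (FractionRing (MvPolynomial (Fin p) k)))))
    (hDmX : Dm RatFunc.X = 1)
    (hcomm : ∀ i z, D' i (Dm z) = Dm (D' i z))
    (ff : Fin p → RatFunc (FractionRing (MvPolynomial (Fin p) k)))
    (fm : RatFunc (FractionRing (MvPolynomial (Fin p) k)))
    (hclosed₁ : ∀ i : Fin p,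
      D' i (liftRF (algebraMap _ _) fm) = Dm (liftRF (algebraMap _ _) (ff i)))
    (hclosed₂ : ∀ i j : Fin p,
      D' i (liftRF (algebraMap _ _) (ff j)) = D' j (liftRF (algebraMap _ _) (ff i)))
    (n : ℕ) (a : RatFunc (FractionRing (MvPolynomial (Fin p) k)))
    (c : Fin n → AlgebraicClosure (FractionRing (MvPolynomial (Fin p) k)))
    (b : Fin n → Polynomial (AlgebraicClosure (FractionRing (MvPolynomial (Fin p) k))))
    (hbdeg : ∀ j, 0 < (b j).degree)
    (hbcop : ∀ j₁ j₂, j₁ ≠ j₂ → IsCoprime (b j₁) (b j₂))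
    (hdec : liftRF (algebraMap _ _) fm = Dm (liftRF (algebraMap _ _) a) +
      ∑ j, RatFunc.C (c j) *
        Dm (algebraMap (Polynomial _) (RatFunc _) (b j)) /
        algebraMap (Polynomial _) (RatFunc _) (b j)) :
    ∀ (i : Fin p) (j : Fin n), δ i (c j) = 0 :=
  stmt_5_general k p δ D' hD'add hD'mul hD'C Dm hDmX hcomm ff fm hclosed₁ n a c b hbdeg hbcop hdec
end

section
/- Let $F$ be a field of characteristic zero and $K = F(x)$ the rational function field with derivation $D = d/dx$. For every $f \in K$ there exist $g, h \in K$ such that $f = D(g) + h$, where $h = a/b$ with $a, b \in F[x]$ coprime, $b$ squarefree, and $\deg a < \deg b$. Moreover, $f = D(g')$ for some $g' \in K$ if and only if $h = 0$. -/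
/-!
If an irreducible `q` divides the denominator of `r / (q ^ (k + 2) * e)` exactly `k + 2` times,
then `q` is coprime to `q' * e` (irreducible polynomials are separable in characteristic zero),
and a Bézout relation produces `c` such that subtracting `D (c / q ^ (k + 1))` leaves a fraction
with denominator `q ^ (k + 1) * e`. Induction on the degree of the denominator reaches a
squarefree denominator; reducing the fraction and integrating the polynomial part of the
division makes it proper.

Conversely, if `a / b = D (p / s)` with `b` squarefree and nonconstant, an irreducible factor `q`
of `b` must divide `s`, say exactly `j + 1` times. The numerator `p' * s - p * s'` is then divisible
by `q` exactly `j` times, so comparing `q`-adic orders in `a * s ^ 2 = b * (p' * s - p * s')`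
forces `q ^ 2 ∣ b`.
-/

open Polynomial

theorem exists_eq_pow_add_mul_of_pow_dvd {R : Type*} [CommMonoidWithZero R] [IsCancelMulZero R]
    [WfDvdMonoid R] {q d : R} (hq : ¬ IsUnit q) (hd : d ≠ 0) {n : ℕ} (hqd : q ^ n ∣ d) :
    ∃ (k : ℕ) (e : R), ¬ q ∣ e ∧ d = q ^ (k + n) * e := by
  have hfin : FiniteMultiplicity q d := .of_not_isUnit hq hd
  obtain ⟨e, hde, hqe⟩ := hfin.exists_eq_pow_mul_and_not_dvd
  refine ⟨multiplicity q d - n, e, hqe, ?_⟩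
  rwa [Nat.sub_add_cancel (hfin.le_multiplicity_of_pow_dvd hqd)]

namespace Polynomial

variable {F : Type*} [Field F] [CharZero F]

theorem exists_derivative_eq (p : F[X]) : ∃ q : F[X], derivative q = p := by
  refine ⟨∑ i ∈ Finset.range (p.natDegree + 1), C (p.coeff i / (i + 1)) * X ^ (i + 1), ?_⟩
  conv_rhs => rw [p.as_sum_range_C_mul_X_pow]
  rw [map_sum]
  refine Finset.sum_congr rfl fun i _ => ?_
  rw [derivative_C_mul_X_pow]
  push_cast
  rw [div_mul_cancel₀ _ (Nat.cast_add_one_ne_zero i)]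

theorem exists_hermite_step {q e : F[X]} (hqe : IsCoprime q (derivative q * e)) (k : ℕ)
    (r : F[X]) :
    ∃ c A : F[X], r = (derivative c * q - C ((k : F) + 1) * c * derivative q) * e + A * q := by
  obtain ⟨α, β, hαβ⟩ := hqe
  set c := -C ((k : F) + 1)⁻¹ * r * β
  refine ⟨c, r * α - derivative c * e, ?_⟩
  have hkc : C ((k : F) + 1) * c = -r * β := by
    have : C ((k : F) + 1) * C ((k : F) + 1)⁻¹ = 1 := by
      rw [← C_mul, mul_inv_cancel₀ (Nat.cast_add_one_ne_zero k), C_1]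
    linear_combination (-r * β) * this
  clear_value c
  linear_combination derivative q * e * hkc - r * hαβ

theorem exists_derivative_mul_sub_eq_pow_mul {p s q t : F[X]} (hps : IsCoprime p s)
    (hq : Irreducible q) (hqt : ¬ q ∣ t) {j : ℕ} (hs : s = q ^ (j + 1) * t) :
    ∃ w, ¬ q ∣ w ∧ derivative p * s - p * derivative s = q ^ j * w := by
  refine ⟨derivative p * q * t - C ((j : F) + 1) * p * derivative q * t - p * q * derivative t,
    fun hqw => ?_, by rw [hs, derivative_mul, derivative_pow_succ]; ring⟩
  have hdvd : q ∣ C ((j : F) + 1) * p * derivative q * t := by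
    have h : q ∣ (derivative p * t - p * derivative t) * q := dvd_mul_left q _
    convert dvd_sub h hqw using 1
    ring
  obtain ((hqC | hqp) | hqq') | hqt' := by simpa only [hq.prime.dvd_mul] using hdvd
  · exact hq.not_isUnit (isUnit_of_dvd_unit hqC
      (isUnit_C.mpr (Ne.isUnit (Nat.cast_add_one_ne_zero j))))
  · exact hq.not_isUnit (hps.isUnit_of_dvd' hqp
      (hs ▸ dvd_mul_of_dvd_left (dvd_pow_self q j.succ_ne_zero) t))
  · exact hq.not_isUnit (hq.separable.isUnit_of_dvd' dvd_rfl hqq')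
  · exact hqt hqt'

theorem mul_sq_ne_mul_derivative_mul_sub {a b p s : F[X]} (hab : IsCoprime a b)
    (hb : Squarefree b) (hbu : ¬ IsUnit b) (hps : IsCoprime p s) (hs : s ≠ 0) :
    a * s ^ 2 ≠ b * (derivative p * s - p * derivative s) := by
  intro heq
  obtain ⟨q, hq, hqb⟩ := WfDvdMonoid.exists_irreducible_factor hbu hb.ne_zero
  have hqa : ¬ q ∣ a := fun h => hq.not_isUnit (hab.isUnit_of_dvd' h hqb)
  have hqs : q ^ 1 ∣ s := by
    have : q ∣ a * s ^ 2 := heq ▸ dvd_mul_of_dvd_left hqb _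
    rw [pow_one]
    exact hq.prime.dvd_of_dvd_pow ((hq.prime.dvd_or_dvd this).resolve_left hqa)
  obtain ⟨j, t, hqt, hst⟩ := exists_eq_pow_add_mul_of_pow_dvd hq.not_isUnit hs hqs
  obtain ⟨w, hqw, hw⟩ := exists_derivative_mul_sub_eq_pow_mul hps hq hqt hst
  have hq2 : q ^ 2 ∣ b * w := by
    refine ⟨a * q ^ j * t ^ 2, mul_left_cancel₀ (pow_ne_zero j hq.ne_zero) ?_⟩
    rw [mul_left_comm, ← hw, ← heq, hst]
    ring
  exact hq.not_isUnit (hb q (by rw [← sq]; exact hq.prime.pow_dvd_of_dvd_mul_right 2 hqw hq2))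

end Polynomial

namespace RatFunc

variable {F : Type*} [Field F] {D : Derivation F (RatFunc F) (RatFunc F)}

theorem derivation_algebraMap (hD : D X = 1) (p : F[X]) :
    D (algebraMap F[X] (RatFunc F) p) = algebraMap F[X] (RatFunc F) (derivative p) := by
  have : D.compAlgebraMap F[X] = (Algebra.linearMap F[X] (RatFunc F)).compDer derivative' :=
    Polynomial.derivation_ext (by simp [algebraMap_X, hD])
  exact congr($this p)

theorem derivation_algebraMap_div (hD : D X = 1) (p s : F[X]) :
    D (algebraMap F[X] (RatFunc F) p / algebraMap F[X] (RatFunc F) s) =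
      algebraMap F[X] (RatFunc F) (derivative p * s - p * derivative s) /
        algebraMap F[X] (RatFunc F) (s ^ 2) := by
  simp only [Derivation.leibniz_div, derivation_algebraMap hD, smul_eq_mul, map_sub, map_mul,
    map_pow]
  ring

variable [CharZero F]

theorem exists_hermite_step (hD : D X = 1) {q e : F[X]} (hq : q ≠ 0) (he : e ≠ 0)
    (hqe : IsCoprime q (derivative q * e)) (k : ℕ) (r : F[X]) :
    ∃ c A : F[X],
      algebraMap F[X] (RatFunc F) r / algebraMap F[X] (RatFunc F) (q ^ (k + 2) * e) =
        D (algebraMap F[X] (RatFunc F) c / algebraMap F[X] (RatFunc F) (q ^ (k + 1))) +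
        algebraMap F[X] (RatFunc F) A / algebraMap F[X] (RatFunc F) (q ^ (k + 1) * e) := by
  obtain ⟨c, A, hr⟩ := Polynomial.exists_hermite_step hqe k r
  refine ⟨c, A, ?_⟩
  have hq' : algebraMap F[X] (RatFunc F) q ≠ 0 := algebraMap_ne_zero hq
  have he' : algebraMap F[X] (RatFunc F) e ≠ 0 := algebraMap_ne_zero he
  replace hr := congr(algebraMap F[X] (RatFunc F) $hr)
  rw [derivation_algebraMap_div hD, derivative_pow_succ]
  simp only [map_add, map_sub, map_mul, map_pow, algebraMap_C] at hr ⊢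
  rw [div_add_div _ _ (by positivity) (by positivity),
    div_eq_div_iff (by positivity) (by positivity)]
  linear_combination
    (algebraMap F[X] (RatFunc F) q ^ (k + 1)) ^ 3 * algebraMap F[X] (RatFunc F) e * hr

theorem exists_eq_derivation_add_div_squarefree (hD : D X = 1) (f : RatFunc F) :
    ∃ (g : RatFunc F) (a b : F[X]), Squarefree b ∧
      f = D g + algebraMap F[X] (RatFunc F) a / algebraMap F[X] (RatFunc F) b := by
  suffices ∀ (n : ℕ) (d : F[X]), d.natDegree = n → d ≠ 0 → ∀ r : F[X],
      ∃ (g : RatFunc F) (a b : F[X]), Squarefree b ∧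
        algebraMap F[X] (RatFunc F) r / algebraMap F[X] (RatFunc F) d =
          D g + algebraMap F[X] (RatFunc F) a / algebraMap F[X] (RatFunc F) b by
    rw [← num_div_denom f]
    exact this _ _ rfl (denom_ne_zero f) _
  intro n
  induction n using Nat.strong_induction_on with
  | _ n ih =>
  intro d hdn hd r
  by_cases hsq : Squarefree d
  · exact ⟨0, r, d, hsq, by rw [map_zero, zero_add]⟩
  obtain ⟨q, hq, hqd⟩ : ∃ q, Irreducible q ∧ q ^ 2 ∣ d := by
    simpa [sq, squarefree_iff_no_irreducibles hd] using hsq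
  obtain ⟨k, e, hqe, rfl⟩ := exists_eq_pow_add_mul_of_pow_dvd hq.not_isUnit hd hqd
  have he : e ≠ 0 := right_ne_zero_of_mul hd
  have hcop : IsCoprime q (derivative q * e) :=
    hq.separable.mul_right ((hq.coprime_iff_not_dvd).mpr hqe)
  obtain ⟨c, A, hstep⟩ := exists_hermite_step hD hq.ne_zero he hcop k r
  have hlt : (q ^ (k + 1) * e).natDegree < n := by
    rw [← hdn, natDegree_mul (pow_ne_zero _ hq.ne_zero) he,
      natDegree_mul (pow_ne_zero _ hq.ne_zero) he, natDegree_pow, natDegree_pow]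
    have := hq.natDegree_pos
    nlinarith
  obtain ⟨g, a, b, hb, heq⟩ := ih _ hlt _ rfl (mul_ne_zero (pow_ne_zero _ hq.ne_zero) he) A
  refine ⟨algebraMap F[X] (RatFunc F) c / algebraMap F[X] (RatFunc F) (q ^ (k + 1)) + g,
    a, b, hb, ?_⟩
  rw [hstep, heq, map_add, add_assoc]

theorem exists_eq_derivation_add_proper_div (hD : D X = 1) {a₀ b₀ : F[X]}
    (hb₀ : Squarefree b₀) :
    ∃ (g : RatFunc F) (a b : F[X]), IsCoprime a b ∧ Squarefree b ∧ a.degree < b.degree ∧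
      algebraMap F[X] (RatFunc F) a₀ / algebraMap F[X] (RatFunc F) b₀ =
        D g + algebraMap F[X] (RatFunc F) a / algebraMap F[X] (RatFunc F) b := by
  set h := algebraMap F[X] (RatFunc F) a₀ / algebraMap F[X] (RatFunc F) b₀
  obtain ⟨G, hG⟩ := exists_derivative_eq (h.num / h.denom)
  refine ⟨algebraMap F[X] (RatFunc F) G, h.num % h.denom, h.denom, ?_,
    hb₀.squarefree_of_dvd (denom_div_dvd a₀ b₀), degree_mod_lt _ (denom_ne_zero h), ?_⟩
  · rw [EuclideanDomain.mod_eq_sub_mul_div, sub_eq_add_neg, ← mul_neg]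
    exact (isCoprime_num_denom h).add_mul_left_left _
  · conv_lhs => rw [← num_div_denom h, ← EuclideanDomain.div_add_mod h.num h.denom]
    have hden : algebraMap F[X] (RatFunc F) h.denom ≠ 0 := algebraMap_ne_zero (denom_ne_zero h)
    rw [derivation_algebraMap hD, hG, map_add, map_mul, add_div, mul_div_cancel_left₀ _ hden]

theorem div_ne_derivation (hD : D X = 1) {a b : F[X]} (hab : IsCoprime a b) (hb : Squarefree b)
    (hbu : ¬ IsUnit b) (h : RatFunc F) :
    algebraMap F[X] (RatFunc F) a / algebraMap F[X] (RatFunc F) b ≠ D h := by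
  rw [← num_div_denom h, derivation_algebraMap_div hD, ne_eq,
    div_eq_div_iff (algebraMap_ne_zero hb.ne_zero)
      (algebraMap_ne_zero (pow_ne_zero 2 (denom_ne_zero h))), ← map_mul, ← map_mul,
    (algebraMap_injective F).eq_iff, mul_comm _ b]
  exact mul_sq_ne_mul_derivative_mul_sub hab hb hbu (isCoprime_num_denom h) (denom_ne_zero h)

end RatFunc

/-- Hermite reduction: over a field `F` of characteristic zero, every rational function
`f ∈ F(x)` can be written `f = D(g) + a/b` with `a, b` coprime polynomials, `b`
squarefree, `deg a < deg b`; moreover `f` is a derivative in `F(x)` iff `a = 0`. -/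
theorem stmt_6 (F : Type*) [Field F] [CharZero F]
    (D : Derivation F (RatFunc F) (RatFunc F)) (hD : D RatFunc.X = 1)
    (f : RatFunc F) :
    ∃ (g : RatFunc F) (a b : Polynomial F),
      IsCoprime a b ∧ Squarefree b ∧ a.degree < b.degree ∧
      f = D g + algebraMap (Polynomial F) (RatFunc F) a /
        algebraMap (Polynomial F) (RatFunc F) b ∧
      ((∃ g' : RatFunc F, f = D g') ↔ a = 0) := by
  obtain ⟨g₀, a₀, b₀, hb₀, hf₀⟩ := RatFunc.exists_eq_derivation_add_div_squarefree hD f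
  obtain ⟨g₁, a, b, hab, hb, hdeg, hf₁⟩ := RatFunc.exists_eq_derivation_add_proper_div hD hb₀
  have hf : f = D (g₀ + g₁) + algebraMap F[X] (RatFunc F) a / algebraMap F[X] (RatFunc F) b := by
    rw [hf₀, hf₁, map_add, add_assoc]
  refine ⟨g₀ + g₁, a, b, hab, hb, hdeg, hf, ⟨fun ⟨g', hg'⟩ => ?_, fun ha => ⟨g₀ + g₁, ?_⟩⟩⟩
  · by_contra ha
    have hbu : ¬ IsUnit b :=
      not_isUnit_of_degree_pos b ((zero_le_degree_iff.mpr ha).trans_lt hdeg)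
    refine RatFunc.div_ne_derivation hD hab hb hbu (g' - (g₀ + g₁)) ?_
    rw [map_sub, ← hg', hf, add_sub_cancel_left]
  · rw [hf, ha, map_zero, zero_div, add_zero]
end

section
/- Let $K \subseteq L \subseteq A$ be finite extensions of differential fields of characteristic zero where the derivation $D$ commutes with all field embeddings involved, and let $\mathrm{Tr}_{A/L}$ and $N_{A/L}$ denote the trace and norm maps. Then for every nonzero $b \in A$, $\mathrm{Tr}_{A/L}\left(\frac{D(b)}{b}\right) = \frac{D(N_{A/L}(b))}{N_{A/L}(b)}$. -/
/-!
In a basis `e` of `A` over `L`, a derivation `D` of `A` extending one of `L` splits as `∂ + P`,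
where `∂` differentiates coordinates and `P` is the `L`-linear map with matrix
`P i j = (D (e j))_i`. Multiplication by `D b` is the commutator of `D` with multiplication by
`b`, so its matrix is `∂M + [P, M]`, where `M` is the matrix of multiplication by `b`. Hence
`Tr (D b / b) = tr ((∂M + [P, M]) M⁻¹) = tr (M⁻¹ ∂M)`, which by Jacobi's formula is
`D (det M) / det M = D (N b) / N b`.
-/

namespace Derivation

variable {S R : Type*} [CommRing S] [CommRing R] [Algebra S R] (d : Derivation S R R)

theorem map_finsetProd {ι : Type*} [DecidableEq ι] (s : Finset ι) (f : ι → R) :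
    d (∏ i ∈ s, f i) = ∑ j ∈ s, (∏ i ∈ s.erase j, f i) * d (f j) := by
  induction s using Finset.induction_on with
  | empty => simp
  | insert a s ha ih =>
    rw [Finset.prod_insert ha, d.leibniz, smul_eq_mul, smul_eq_mul, ih, Finset.mul_sum,
      Finset.sum_insert ha, Finset.erase_insert ha, add_comm]
    congr 1
    refine Finset.sum_congr rfl fun j hj => ?_
    rw [Finset.erase_insert_of_ne (by rintro rfl; exact ha hj),
      Finset.prod_insert (fun h => ha (Finset.mem_of_mem_erase h)), mul_assoc]

theorem map_det {n : Type*} [Fintype n] [DecidableEq n] (M : Matrix n n R) :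
    d M.det = (M.adjugate * M.map d).trace := by
  calc d M.det
      = ∑ j, ∑ σ : Equiv.Perm n, (Equiv.Perm.sign σ : R) *
          ∏ i, (M.updateCol j fun k => d (M k j)) (σ i) i := by
        simp_rw [Matrix.det_apply', map_sum, ← zsmul_eq_mul, map_zsmul, map_finsetProd,
          Finset.smul_sum]
        rw [Finset.sum_comm]
        refine Finset.sum_congr rfl fun j _ => Finset.sum_congr rfl fun σ _ => ?_
        rw [← Finset.mul_prod_erase Finset.univ _ (Finset.mem_univ j), mul_comm,
          Matrix.updateCol_self]
        congr 2
        exact Finset.prod_congr rfl fun i hi => by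
          rw [Matrix.updateCol_ne (Finset.mem_erase.mp hi).1]
    _ = ∑ j, M.cramer (fun k => d (M k j)) j := by
        simp_rw [Matrix.cramer_apply, Matrix.det_apply']
    _ = (M.adjugate * M.map d).trace := by
        simp [Matrix.cramer_eq_adjugate_mulVec, Matrix.trace, Matrix.mulVec, Matrix.mul_apply,
          dotProduct]

theorem map_det_div_det {K : Type*} [Field K] [Algebra S K] (d : Derivation S K K)
    {n : Type*} [Fintype n] [DecidableEq n] (M : Matrix n n K) :
    d M.det / M.det = (M⁻¹ * M.map d).trace := by
  rw [map_det, Matrix.inv_def, Ring.inverse_eq_inv', Matrix.smul_mul, Matrix.trace_smul,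
    smul_eq_mul, inv_mul_eq_div]

theorem exists_algebraMap_comp {L A : Type*} [CommRing L] [CommRing A] [Algebra L A]
    [FaithfulSMul L A] (dA : Derivation ℤ A A)
    (h : ∀ x : L, dA (algebraMap L A x) ∈ Set.range (algebraMap L A)) :
    ∃ dL : Derivation ℤ L L, ∀ x, dA (algebraMap L A x) = algebraMap L A (dL x) := by
  choose f hf using h
  have hinj := FaithfulSMul.algebraMap_injective L A
  refine ⟨Derivation.mk' (AddMonoidHom.mk' f fun x y => hinj ?_).toIntLinearMap
    fun x y => hinj ?_, fun x => (hf x).symm⟩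
  · simp only [hf, map_add]
  · simp [hf, map_mul]

theorem leibniz_smul_of_algebraMap {L A : Type*} [CommRing L] [CommRing A] [Algebra L A]
    {dA : Derivation ℤ A A} {dL : Derivation ℤ L L}
    (hd : ∀ x, dA (algebraMap L A x) = algebraMap L A (dL x)) (c : L) (x : A) :
    dA (c • x) = c • dA x + dL c • x := by
  rw [Algebra.smul_def, dA.leibniz, hd, smul_eq_mul, smul_eq_mul, ← Algebra.smul_def, mul_comm,
    ← Algebra.smul_def]

end Derivation

namespace Module.Basis

open Matrix

variable {L A ι : Type*} [CommRing L] [CommRing A] [Algebra L A] [Fintype ι] [DecidableEq ι]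
  (e : Basis ι L A)

noncomputable def connectionMatrix (dA : Derivation ℤ A A) : Matrix ι ι L :=
  Matrix.of fun i j => e.repr (dA (e j)) i

variable {dA : Derivation ℤ A A} {dL : Derivation ℤ L L}

theorem repr_derivation (hd : ∀ x, dA (algebraMap L A x) = algebraMap L A (dL x))
    (x : A) (i : ι) :
    e.repr (dA x) i = dL (e.repr x i) + (e.connectionMatrix dA *ᵥ e.repr x) i := by
  conv_lhs => rw [← e.sum_repr x, map_sum]; simp only [Derivation.leibniz_smul_of_algebraMap hd]
  simp [Finset.sum_add_distrib, mulVec, dotProduct, connectionMatrix, mul_comm, add_comm,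
    Finsupp.single_apply]

theorem leftMulMatrix_derivation (hd : ∀ x, dA (algebraMap L A x) = algebraMap L A (dL x))
    (b : A) :
    Algebra.leftMulMatrix e (dA b) = (Algebra.leftMulMatrix e b).map dL +
      (e.connectionMatrix dA * Algebra.leftMulMatrix e b -
        Algebra.leftMulMatrix e b * e.connectionMatrix dA) := by
  ext i j
  have hcomm : dA b * e j = dA (b * e j) - b * dA (e j) := by
    rw [dA.leibniz, smul_eq_mul, smul_eq_mul]; ring
  rw [Algebra.leftMulMatrix_eq_repr_mul, hcomm, map_sub, Finsupp.sub_apply, e.repr_derivation hd,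
    ← Algebra.leftMulMatrix_mulVec_repr e b (dA (e j))]
  simp only [Matrix.add_apply, Matrix.sub_apply, Matrix.map_apply, Matrix.mul_apply, mulVec,
    dotProduct, ← Algebra.leftMulMatrix_eq_repr_mul, connectionMatrix, Matrix.of_apply]
  ring

end Module.Basis

theorem Algebra.trace_derivation_div_self {L A : Type*} [Field L] [Field A] [Algebra L A]
    [FiniteDimensional L A] {dA : Derivation ℤ A A} {dL : Derivation ℤ L L}
    (hd : ∀ x, dA (algebraMap L A x) = algebraMap L A (dL x)) {b : A} (hb : b ≠ 0) :
    Algebra.trace L A (dA b / b) = dL (Algebra.norm L b) / Algebra.norm L b := by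
  classical
  let e := Module.finBasis L A
  set M := Algebra.leftMulMatrix e b
  set P := e.connectionMatrix dA
  have hM : IsUnit M.det := by
    rw [← Algebra.norm_eq_matrix_det]; exact (Algebra.norm_ne_zero_iff.mpr hb).isUnit
  have hdiv : Algebra.leftMulMatrix e (dA b / b) = Algebra.leftMulMatrix e (dA b) * M⁻¹ := by
    conv_rhs => rw [← div_mul_cancel₀ (dA b) hb, map_mul,
      Matrix.mul_nonsing_inv_cancel_right _ _ hM]
  have htrace_comm : ((P * M - M * P) * M⁻¹).trace = 0 := by
    rw [Matrix.sub_mul, Matrix.trace_sub, Matrix.mul_assoc, Matrix.mul_nonsing_inv _ hM,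
      Matrix.mul_one, Matrix.trace_mul_cycle, Matrix.nonsing_inv_mul _ hM, Matrix.one_mul, sub_self]
  rw [Algebra.norm_eq_matrix_det e, Derivation.map_det_div_det, Algebra.trace_eq_matrix_trace e,
    hdiv, e.leftMulMatrix_derivation hd, Matrix.add_mul, Matrix.trace_add, htrace_comm, add_zero,
    Matrix.trace_mul_comm]

theorem stmt_10_general (L A : Type*) [Field L] [Field A] [Algebra L A]
    [FiniteDimensional L A]
    (D : A → A)
    (hadd : ∀ a b : A, D (a + b) = D a + D b)
    (hmul : ∀ a b : A, D (a * b) = a * D b + b * D a)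
    (hL : ∀ x : L, D (algebraMap L A x) ∈ Set.range (algebraMap L A))
    (b : A) (hb : b ≠ 0) :
    algebraMap L A (Algebra.trace L A (D b / b)) =
      D (algebraMap L A (Algebra.norm L b)) /
        algebraMap L A (Algebra.norm L b) := by
  let dA : Derivation ℤ A A := Derivation.mk' (AddMonoidHom.mk' D hadd).toIntLinearMap hmul
  obtain ⟨dL, hd⟩ := dA.exists_algebraMap_comp hL
  change algebraMap L A (Algebra.trace L A (dA b / b)) = dA _ / _
  rw [Algebra.trace_derivation_div_self hd hb, map_div₀, hd]

/-- Logarithmic derivative of the norm: if `A` is a finite extension of `L`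
(characteristic zero) and `D` is a derivation on `A` mapping `L` into `L`, then for
every nonzero `b ∈ A`, `Tr_{A/L}(D(b)/b) = D(N_{A/L}(b)) / N_{A/L}(b)`. -/
theorem stmt_10 (L A : Type*) [Field L] [Field A] [CharZero L] [Algebra L A]
    [FiniteDimensional L A]
    (D : A → A)
    (hadd : ∀ a b : A, D (a + b) = D a + D b)
    (hmul : ∀ a b : A, D (a * b) = a * D b + b * D a)
    (hL : ∀ x : L, D (algebraMap L A x) ∈ Set.range (algebraMap L A))
    (b : A) (hb : b ≠ 0) :
    algebraMap L A (Algebra.trace L A (D b / b)) =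
      D (algebraMap L A (Algebra.norm L b)) /
        algebraMap L A (Algebra.norm L b) :=
  stmt_10_general L A D hadd hmul hL b hb
end

section
/- Let $b_n = \sum_{\ell=0}^{n} \binom{n}{\ell}^2 \binom{n+\ell}{\ell}^2$ denote the Apéry numbers. Then for all $n \geq 2$, $n^3 b_n - (34n^3 - 51n^2 + 27n - 5) b_{n-1} + (n-1)^3 b_{n-2} = 0$. -/
/-- The Apéry numbers `b_n = ∑_{ℓ=0}^n C(n,ℓ)² C(n+ℓ,ℓ)²`. -/
def aperyNumber (n : ℕ) : ℤ :=
  ∑ ℓ ∈ Finset.range (n + 1),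
    (n.choose ℓ : ℤ) ^ 2 * ((n + ℓ).choose ℓ : ℤ) ^ 2

/-- The summand of the Apéry numbers, as a rational. -/
def FQ (n k : ℕ) : ℚ := (n.choose k : ℚ) ^ 2 * ((n + k).choose k : ℚ) ^ 2

/-- The Zeilberger certificate for the Apéry recurrence (multiplied by `(n+1)²(n+2)²`). -/
def HQ (n k : ℕ) : ℚ :=
  4 * (k : ℚ) ^ 4 * (2 * (n : ℚ) + 3) *
    (2 * (k : ℚ) ^ 2 - 3 * (k : ℚ) - 4 * ((n : ℚ) + 1) * ((n : ℚ) + 2)) *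
    ((n + 2).choose k : ℚ) ^ 2 * ((n + k).choose k : ℚ) ^ 2

lemma q1 (n k : ℕ) (h : k ≤ n) :
    ((n + 1).choose k : ℚ) = (n.choose k : ℚ) * ((n : ℚ) + 1) / ((n : ℚ) + 1 - (k : ℚ)) := by
  have hkn : (k : ℚ) ≤ (n : ℚ) := by exact_mod_cast h
  have hne : ((n : ℚ) + 1 - (k : ℚ)) ≠ 0 := by linarith
  rw [eq_div_iff hne]
  have hz := Nat.choose_mul_succ_eq n k
  have hc : ((n + 1 - k : ℕ) : ℚ) = (n : ℚ) + 1 - (k : ℚ) := by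
    have hk1 : k ≤ n + 1 := by omega
    push_cast [hk1]; ring
  have hzq : (n.choose k : ℚ) * ((n : ℚ) + 1) = ((n + 1).choose k : ℚ) * ((n + 1 - k : ℕ) : ℚ) := by
    exact_mod_cast congrArg (Nat.cast : ℕ → ℚ) hz
  rw [hc] at hzq
  linarith [hzq]

lemma q2n (n k : ℕ) : ((n + k + 1).choose k) * (n + 1) = ((n + k).choose k) * (n + k + 1) := by
  have h := Nat.add_one_mul_choose_eq (n + k) n
  have s1 : (n + k).choose n = (n + k).choose k := Nat.choose_symm_add
  have s2 : (n + k + 1).choose (n + 1) = (n + k + 1).choose k := by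
    rw [show n + k + 1 = (n + 1) + k by omega, Nat.choose_symm_add]
  rw [s1, s2] at h
  calc (n + k + 1).choose k * (n + 1) = (n + k + 1) * (n + k).choose k := h.symm
    _ = (n + k).choose k * (n + k + 1) := Nat.mul_comm _ _

lemma q2 (n k : ℕ) :
    ((n + k + 1).choose k : ℚ) = ((n + k).choose k : ℚ) * ((n : ℚ) + (k : ℚ) + 1) / ((n : ℚ) + 1) := by
  have hne : ((n : ℚ) + 1) ≠ 0 := by positivity
  rw [eq_div_iff hne]
  exact_mod_cast congrArg (Nat.cast : ℕ → ℚ) (q2n n k)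

lemma q3 (m k : ℕ) (h : k ≤ m) :
    (m.choose (k + 1) : ℚ) = (m.choose k : ℚ) * ((m : ℚ) - (k : ℚ)) / ((k : ℚ) + 1) := by
  have hne : ((k : ℚ) + 1) ≠ 0 := by positivity
  rw [eq_div_iff hne]
  have hz := Nat.choose_succ_right_eq m k
  have hc : ((m - k : ℕ) : ℚ) = (m : ℚ) - (k : ℚ) := by push_cast [h]; ring
  have hzq : (m.choose (k + 1) : ℚ) * ((k : ℚ) + 1) = (m.choose k : ℚ) * ((m - k : ℕ) : ℚ) := by
    exact_mod_cast congrArg (Nat.cast : ℕ → ℚ) hz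
  rw [hc] at hzq
  exact hzq

lemma q4 (n k : ℕ) :
    ((n + k + 1).choose (k + 1) : ℚ) =
      ((n + k).choose k : ℚ) * ((n : ℚ) + (k : ℚ) + 1) / ((k : ℚ) + 1) := by
  have hne : ((k : ℚ) + 1) ≠ 0 := by positivity
  rw [eq_div_iff hne]
  have hz := Nat.add_one_mul_choose_eq (n + k) k
  have hzq : ((n + k + 1) : ℚ) * ((n + k).choose k : ℚ) = ((n + k + 1).choose (k + 1) : ℚ) * ((k : ℚ) + 1) := by
    exact_mod_cast congrArg (Nat.cast : ℕ → ℚ) hz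
  push_cast at hzq ⊢
  linarith [hzq]

lemma key (n k : ℕ) :
    ((n : ℚ) + 1) ^ 2 * ((n : ℚ) + 2) ^ 2 *
      (((n : ℚ) + 2) ^ 3 * FQ (n + 2) k
        - (2 * (n : ℚ) + 3) * (17 * (n : ℚ) ^ 2 + 51 * (n : ℚ) + 39) * FQ (n + 1) k
        + ((n : ℚ) + 1) ^ 3 * FQ n k)
      = HQ n (k + 1) - HQ n k := by
  have c1 : ((n : ℚ) + 1) ≠ 0 := by positivity
  have c2 : ((n : ℚ) + 2) ≠ 0 := by positivity
  have c3 : ((k : ℚ) + 1) ≠ 0 := by positivity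
  simp only [FQ, HQ]
  rw [show n + (k + 1) = n + k + 1 by omega, show n + 2 + k = n + 1 + k + 1 by omega]
  rw [q2 (n + 1) k]
  push_cast
  rw [show n + 1 + k = n + k + 1 by omega]
  rw [q2 n k, q4 n k]
  rcases le_or_gt k n with h | h
  · -- generic case k ≤ n
    have h2 : k ≤ n + 1 := by omega
    have h3 : k ≤ n + 2 := by omega
    have c4 : ((n : ℚ) + 1 - (k : ℚ)) ≠ 0 := by
      have : (k : ℚ) ≤ (n : ℚ) := by exact_mod_cast h
      intro hc; linarith
    have c5 : ((n : ℚ) + 2 - (k : ℚ)) ≠ 0 := by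
      have : (k : ℚ) ≤ (n : ℚ) := by exact_mod_cast h
      intro hc; linarith
    have c5' : ((n : ℚ) + 1 + 1 - (k : ℚ)) ≠ 0 := by
      have : (k : ℚ) ≤ (n : ℚ) := by exact_mod_cast h
      intro hc; linarith
    rw [q3 (n + 2) k h3]
    push_cast
    rw [show n + 2 = n + 1 + 1 by omega]
    rw [q1 (n + 1) k h2]
    push_cast
    rw [q1 n k h]
    field_simp
    ring
  · rcases (show k = n + 1 ∨ k = n + 2 ∨ n + 3 ≤ k by omega) with h1 | h1 | h1
    · subst h1
      have v0 : ((n.choose (n + 1) : ℕ) : ℚ) = 0 := by simp [Nat.choose_succ_self]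
      have v1 : (((n + 1).choose (n + 1) : ℕ) : ℚ) = 1 := by simp
      have v2 : (((n + 2).choose (n + 1) : ℕ) : ℚ) = (n : ℚ) + 2 := by
        have hv : (n + 2).choose (n + 1) = n + 2 := by
          rw [show n + 2 = (n + 1) + 1 by omega]
          exact Nat.choose_succ_self_right (n + 1)
        rw [hv]; push_cast; ring
      have v3 : (((n + 2).choose (n + 1 + 1) : ℕ) : ℚ) = 1 := by
        rw [show n + 1 + 1 = n + 2 by omega]; simp
      rw [v0, v1, v2, v3]
      push_cast
      field_simp
      ring
    · subst h1
      have v0 : ((n.choose (n + 2) : ℕ) : ℚ) = 0 := by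
        rw [Nat.choose_eq_zero_of_lt (by omega)]; simp
      have v1 : (((n + 1).choose (n + 2) : ℕ) : ℚ) = 0 := by
        rw [Nat.choose_eq_zero_of_lt (by omega)]; simp
      have v2 : (((n + 2).choose (n + 2) : ℕ) : ℚ) = 1 := by simp
      have v3 : (((n + 2).choose (n + 2 + 1) : ℕ) : ℚ) = 0 := by
        rw [Nat.choose_eq_zero_of_lt (by omega)]; simp
      rw [v0, v1, v2, v3]
      push_cast
      field_simp
      ring
    · have v0 : ((n.choose k : ℕ) : ℚ) = 0 := by
        rw [Nat.choose_eq_zero_of_lt (by omega)]; simp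
      have v1 : (((n + 1).choose k : ℕ) : ℚ) = 0 := by
        rw [Nat.choose_eq_zero_of_lt (by omega)]; simp
      have v2 : (((n + 2).choose k : ℕ) : ℚ) = 0 := by
        rw [Nat.choose_eq_zero_of_lt (by omega)]; simp
      have v3 : (((n + 2).choose (k + 1) : ℕ) : ℚ) = 0 := by
        rw [Nat.choose_eq_zero_of_lt (by omega)]; simp
      rw [v0, v1, v2, v3]
      ring

lemma apery_cast (n : ℕ) :
    ((aperyNumber n : ℤ) : ℚ) = ∑ k ∈ Finset.range (n + 1), FQ n k := by
  simp only [aperyNumber, FQ]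
  push_cast
  rfl

lemma sumQ (m : ℕ) :
    ((m : ℚ) + 1) ^ 2 * ((m : ℚ) + 2) ^ 2 *
      (((m : ℚ) + 2) ^ 3 * ((aperyNumber (m + 2) : ℤ) : ℚ)
        - (2 * (m : ℚ) + 3) * (17 * (m : ℚ) ^ 2 + 51 * (m : ℚ) + 39) *
            ((aperyNumber (m + 1) : ℤ) : ℚ)
        + ((m : ℚ) + 1) ^ 3 * ((aperyNumber m : ℤ) : ℚ)) = 0 := by
  have e2 : ((aperyNumber (m + 2) : ℤ) : ℚ) = ∑ k ∈ Finset.range (m + 3), FQ (m + 2) k := by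
    rw [apery_cast, show m + 2 + 1 = m + 3 by omega]
  have e1 : ((aperyNumber (m + 1) : ℤ) : ℚ) = ∑ k ∈ Finset.range (m + 3), FQ (m + 1) k := by
    rw [apery_cast]
    conv_rhs => rw [show m + 3 = (m + 1 + 1) + 1 by omega, Finset.sum_range_succ]
    have : FQ (m + 1) (m + 1 + 1) = 0 := by
      simp [FQ, Nat.choose_succ_self]
    rw [this, add_zero]
  have e0 : ((aperyNumber m : ℤ) : ℚ) = ∑ k ∈ Finset.range (m + 3), FQ m k := by
    rw [apery_cast]
    conv_rhs => rw [show m + 3 = (m + 1) + 1 + 1 by omega, Finset.sum_range_succ,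
      Finset.sum_range_succ]
    have z1 : FQ m (m + 1) = 0 := by simp [FQ, Nat.choose_succ_self]
    have z2 : FQ m (m + 1 + 1) = 0 := by
      have : m.choose (m + 1 + 1) = 0 := Nat.choose_eq_zero_of_lt (by omega)
      simp [FQ, this]
    rw [z1, z2, add_zero, add_zero]
  have tele : ∑ k ∈ Finset.range (m + 3),
      (((m : ℚ) + 1) ^ 2 * ((m : ℚ) + 2) ^ 2 *
        (((m : ℚ) + 2) ^ 3 * FQ (m + 2) k
          - (2 * (m : ℚ) + 3) * (17 * (m : ℚ) ^ 2 + 51 * (m : ℚ) + 39) * FQ (m + 1) k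
          + ((m : ℚ) + 1) ^ 3 * FQ m k)) = 0 := by
    rw [Finset.sum_congr rfl (fun k _ => key m k)]
    rw [Finset.sum_range_sub (f := HQ m)]
    have hz1 : HQ m (m + 3) = 0 := by
      have : (m + 2).choose (m + 3) = 0 := Nat.choose_eq_zero_of_lt (by omega)
      simp [HQ, this]
    have hz0 : HQ m 0 = 0 := by simp [HQ]
    rw [hz1, hz0, sub_zero]
  rw [e2, e1, e0]
  rw [← tele]
  rw [← Finset.mul_sum]
  congr 1
  rw [Finset.sum_add_distrib, Finset.sum_sub_distrib, ← Finset.mul_sum, ← Finset.mul_sum,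
    ← Finset.mul_sum]

/-- The Apéry recurrence: for all `n ≥ 2`,
`n³ b_n - (34n³ - 51n² + 27n - 5) b_{n-1} + (n-1)³ b_{n-2} = 0`. -/
theorem stmt_12 (n : ℕ) (hn : 2 ≤ n) :
    (n : ℤ) ^ 3 * aperyNumber n -
      (34 * (n : ℤ) ^ 3 - 51 * (n : ℤ) ^ 2 + 27 * (n : ℤ) - 5) * aperyNumber (n - 1) +
      ((n : ℤ) - 1) ^ 3 * aperyNumber (n - 2) = 0 := by
  obtain ⟨m, rfl⟩ : ∃ m, n = m + 2 := ⟨n - 2, by omega⟩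
  have h := sumQ m
  have hne : ((m : ℚ) + 1) ^ 2 * ((m : ℚ) + 2) ^ 2 ≠ 0 := by positivity
  have hcan :
      ((m : ℚ) + 2) ^ 3 * ((aperyNumber (m + 2) : ℤ) : ℚ)
        - (2 * (m : ℚ) + 3) * (17 * (m : ℚ) ^ 2 + 51 * (m : ℚ) + 39) *
            ((aperyNumber (m + 1) : ℤ) : ℚ)
        + ((m : ℚ) + 1) ^ 3 * ((aperyNumber m : ℤ) : ℚ) = 0 :=
    (mul_eq_zero.mp h).resolve_left hne
  have hsub1 : m + 2 - 1 = m + 1 := by omega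
  have hsub2 : m + 2 - 2 = m := by omega
  rw [hsub1, hsub2]
  apply Int.cast_injective (α := ℚ)
  push_cast
  linear_combination hcan
end
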